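/- Lipschitz continuity of the solution mapping under truncation. Let P and Y be normed vector spaces, X a Banach space, P×X with the max-norm, C ⊆ Y a closed convex cone with nonempty interior, F: P×X ⇉ Y with nonempty values, and (p̄,x̄) ∈ graph Solv. Suppose hypotheses (i)–(vi) hold: (i) x̄ ∈ Solv(p̄); (ii) p ↦ ν_{F,C}(p,x̄) is u.s.c. at p̄; (iii) for some δ₁ > 0, x ↦ F(p,x) is l.s.c. on X for every p ∈ B(p̄,δ₁); (iv) for some δ₂ > 0, for every p ∈ B(p̄,δ₂) the mapping x ↦ F(p,x) admits an outer prederivative H_{F(p,·)}(x;·) at each x ∈ B(x̄,δ₂); (v) σ_H(p̄,x̄) = inf{ sup_{‖u‖=1} core(C, H_{F(p,·)}(x;u)) : (p,x) ∈ B(p̄,δ₂)×B(x̄,δ₂), F(p,x) ⊄ C } > 0; (vi) for some τ, s, ℓ > 0, for every x ∈ B(x̄,s) the mapping p ↦ F(p,x) is Lipschitz with rate ℓ on B(p̄,τ) with respect to the Pompeiu–Hausdorff distance. If, moreover, F is C-concave on P×X, then Solv has a Lipschitz continuous graphical localization around (p̄,x̄): there exist neighbourhoods V of p̄ and U of x̄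 such that the truncated mapping p ↦ Solv(p) ∩ U is Lipschitz continuous on V with respect to the Pompeiu–Hausdorff distance. -/

import Mathlib

/-!
Ekeland's variational principle, applied to the lower semicontinuous merit function
`x ↦ exc (F p x) C` with a slope `σ < σH`, yields a point that no other point improves by more
than `σ` times its distance. If it were not a solution, condition (v) would give a unit direction
`u` and `r > σ` with `H u + r𝔹 ⊆ C`; since `C + t (H u + r𝔹) ⊆ C` for a convex cone, moving along
`u` lowers the merit with slope close to `r`, a contradiction. Hence
`σ · dist (x, Solv p) ≤ exc (F p x) C` uniformly near `(pbar, xbar)`.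
A solution `x` for `p₂` has merit at most `ℓ · dist p₁ p₂` for `p₁`, so it lies within
`ℓ · dist p₁ p₂ / σ` of a solution for `p₁`. By `C`-concavity `Solv p₁` is convex, and moving
that solution a proportional fraction of the way towards a solution near `xbar` brings it back
into the localizing ball.
-/

open Classical Metric Filter Set
open scoped ENNReal Topology Pointwise

/-- Excess of `A` over `C`: `e(A,C) = sup_{a ∈ A} dist(a,C)`. -/
noncomputable def exc {Y : Type*} [PseudoEMetricSpace Y] (A C : Set Y) : ℝ≥0∞ :=
  ⨆ y ∈ A, EMetric.infEdist y C

/-- A set-valued mapping `Φ` is l.s.c. at `x0`. -/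
def SVLscAt {X Y : Type*} [PseudoMetricSpace X] [TopologicalSpace Y]
    (Φ : X → Set Y) (x0 : X) : Prop :=
  ∀ V : Set Y, IsOpen V → (Φ x0 ∩ V).Nonempty →
    ∃ δ > (0:ℝ), ∀ x ∈ closedBall x0 δ, (Φ x ∩ V).Nonempty

/-- `H` is a (positively homogeneous) outer prederivative of `Φ` at `x0`. -/
def IsOuterPrederivAt {X Y : Type*} [NormedAddCommGroup X] [NormedSpace ℝ X]
    [NormedAddCommGroup Y] [NormedSpace ℝ Y]
    (Φ : X → Set Y) (H : X → Set Y) (x0 : X) : Prop :=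
  (∀ t : ℝ, 0 < t → ∀ u : X, H (t • u) = t • H u) ∧
  ∀ ε > (0:ℝ), ∃ δ > (0:ℝ), ∀ x ∈ closedBall x0 δ,
    Φ x ⊆ Φ x0 + H (x - x0) + (ε * ‖x - x0‖) • closedBall (0:Y) 1

/-- `core(K,S) = sup{r > 0 : S + r𝔹 ⊆ K}`. -/
noncomputable def coreSet {Y : Type*} [NormedAddCommGroup Y] [NormedSpace ℝ Y]
    (K S : Set Y) : ℝ≥0∞ :=
  ⨆ r ∈ {r : ℝ | 0 < r ∧ S + r • closedBall (0:Y) 1 ⊆ K}, ENNReal.ofReal r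

/-- `Φ : P ⇉ X` is Aubin continuous at `(pbar,xbar)` with rate `κ > 0`. -/
def AubinWith {P X : Type*} [PseudoMetricSpace P] [PseudoMetricSpace X]
    (Φ : P → Set X) (pbar : P) (xbar : X) (κ : ℝ) : Prop :=
  0 < κ ∧ ∃ δ > (0:ℝ), ∃ r > (0:ℝ), ∀ p₁ ∈ closedBall pbar δ, ∀ p₂ ∈ closedBall pbar δ,
    ∀ x ∈ Φ p₂ ∩ closedBall xbar r,
      EMetric.infEdist x (Φ p₁) ≤ ENNReal.ofReal (κ * dist p₁ p₂)

/-- Modulus of Aubin continuity: the infimum of the admissible rates. -/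
noncomputable def aubinMod {P X : Type*} [PseudoMetricSpace P] [PseudoMetricSpace X]
    (Φ : P → Set X) (pbar : P) (xbar : X) : ℝ≥0∞ :=
  ⨅ κ ∈ {κ : ℝ | AubinWith Φ pbar xbar κ}, ENNReal.ofReal κ

section Ekeland

variable {X : Type*} [EMetricSpace X] {f : X → ℝ≥0∞} {γ : ℝ≥0∞}

def ekelandSet (f : X → ℝ≥0∞) (γ : ℝ≥0∞) (y : X) : Set X :=
  {x | f x + γ * edist x y ≤ f y}

lemma self_mem_ekelandSet (y : X) : y ∈ ekelandSet f γ y := by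
  simp [ekelandSet]

lemma ekelandSet_trans {x y z : X} (hx : x ∈ ekelandSet f γ y) (hz : z ∈ ekelandSet f γ x) :
    z ∈ ekelandSet f γ y :=
  calc f z + γ * edist z y ≤ f z + γ * edist z x + γ * edist x y := by
        rw [add_assoc, ← mul_add]; gcongr; exact edist_triangle _ _ _
    _ ≤ f x + γ * edist x y := by gcongr; exact hz
    _ ≤ f y := hx

lemma le_of_mem_ekelandSet {x y : X} (hx : x ∈ ekelandSet f γ y) : f x ≤ f y :=
  le_of_add_le_left hx

lemma isClosed_ekelandSet (hf : LowerSemicontinuous f) (hγ : γ ≠ ⊤) (y : X) :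
    IsClosed (ekelandSet f γ y) :=
  (hf.add ((ENNReal.continuous_const_mul hγ).comp
    (continuous_id.edist continuous_const)).lowerSemicontinuous).isClosed_preimage (f y)

lemma mul_edist_le_of_le_iInf_add {y₀ y x : X} {ε : ℝ≥0∞} (hy : y ∈ ekelandSet f γ y₀)
    (hmin : f y ≤ (⨅ w ∈ ekelandSet f γ y₀, f w) + ε) (hfy : f y ≠ ⊤)
    (hx : x ∈ ekelandSet f γ y) : γ * edist x y ≤ ε := by
  have hfx : f x ≠ ⊤ := ne_top_of_le_ne_top hfy (le_of_mem_ekelandSet hx)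
  have hle : f y ≤ f x + ε := hmin.trans (by gcongr; exact iInf₂_le x (ekelandSet_trans hy hx))
  exact (ENNReal.add_le_add_iff_left hfx).1 (hx.trans hle)

theorem LowerSemicontinuous.exists_ekeland [CompleteSpace X] (hf : LowerSemicontinuous f)
    (hγ0 : γ ≠ 0) (hγ : γ ≠ ⊤) {x₀ : X} (hx₀ : f x₀ ≠ ⊤) :
    ∃ z ∈ ekelandSet f γ x₀, ∀ x, f z ≤ f x + γ * edist x z := by
  have hstep : ∀ (n : ℕ) (y : X), ∃ x ∈ ekelandSet f γ y,
      f x ≤ (⨅ w ∈ ekelandSet f γ y, f w) + γ * (n : ℝ≥0∞)⁻¹ := by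
    intro n y
    rcases eq_or_ne (⨅ w ∈ ekelandSet f γ y, f w) ⊤ with h | h
    · exact ⟨y, self_mem_ekelandSet y, by simp [h]⟩
    · have hlt := ENNReal.lt_add_right h (mul_ne_zero hγ0 (ENNReal.inv_ne_zero.2
        (ENNReal.natCast_ne_top n)))
      simp only [iInf_lt_iff] at hlt
      obtain ⟨x, hx, hfx⟩ := hlt
      exact ⟨x, hx, hfx.le⟩
  choose! next hnext_mem hnext_min using hstep
  let u : ℕ → X := fun n => Nat.rec x₀ next n
  have hchain : ∀ n m, n ≤ m → u m ∈ ekelandSet f γ (u n) := by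
    intro n m hnm
    induction m, hnm using Nat.le_induction with
    | base => exact self_mem_ekelandSet _
    | succ m _ ih => exact ekelandSet_trans ih (hnext_mem m (u m))
  have hdiam : ∀ n, ∀ x ∈ ekelandSet f γ (u (n + 1)), ∀ y ∈ ekelandSet f γ (u (n + 1)),
      edist x y ≤ 2 * (n : ℝ≥0∞)⁻¹ := by
    intro n x hx y hy
    have hsmall : ∀ w ∈ ekelandSet f γ (u (n + 1)), edist w (u (n + 1)) ≤ (n : ℝ≥0∞)⁻¹ :=
      fun w hw => (ENNReal.mul_le_mul_iff_right hγ0 hγ).1 <|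
        mul_edist_le_of_le_iInf_add (hnext_mem n (u n)) (hnext_min n (u n))
          (ne_top_of_le_ne_top hx₀ (le_of_mem_ekelandSet (hchain 0 (n + 1) (by omega)))) hw
    calc edist x y ≤ edist x (u (n + 1)) + edist y (u (n + 1)) := edist_triangle_right _ _ _
      _ ≤ 2 * (n : ℝ≥0∞)⁻¹ := by rw [two_mul]; exact add_le_add (hsmall x hx) (hsmall y hy)
  have hlim : Tendsto (fun n : ℕ => 2 * (n : ℝ≥0∞)⁻¹) atTop (𝓝 0) := by
    simpa using
      ENNReal.Tendsto.const_mul ENNReal.tendsto_inv_nat_nhds_zero (Or.inr ENNReal.ofNat_ne_top)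
  have hcauchy : CauchySeq (fun n => u (n + 1)) :=
    EMetric.cauchySeq_iff_le_tendsto_0.2 ⟨_, fun n m N hn hm =>
      hdiam N _ (hchain (N + 1) (n + 1) (by omega)) _ (hchain (N + 1) (m + 1) (by omega)), hlim⟩
  obtain ⟨z, hz⟩ := cauchySeq_tendsto_of_complete hcauchy
  have hzmem : ∀ n, z ∈ ekelandSet f γ (u n) := fun n =>
    (isClosed_ekelandSet hf hγ _).mem_of_tendsto hz <|
      (eventually_ge_atTop n).mono fun m hm => hchain n (m + 1) (by omega)
  refine ⟨z, hzmem 0, fun x => ?_⟩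
  by_contra! hlt
  have hxz : edist x z = 0 := le_antisymm (ge_of_tendsto' hlim fun n =>
    hdiam n x (ekelandSet_trans (hzmem (n + 1)) hlt.le) z (hzmem (n + 1))) zero_le
  obtain rfl := edist_eq_zero.1 hxz
  simp at hlt

end Ekeland

theorem LowerSemicontinuous.exists_eq_zero_mul_edist_le {X : Type*} [EMetricSpace X]
    [CompleteSpace X] {f : X → ℝ≥0∞} {γ : ℝ≥0∞} (hf : LowerSemicontinuous f) (hγ0 : γ ≠ 0)
    (hγ : γ ≠ ⊤) {x₀ : X} (hx₀ : f x₀ ≠ ⊤)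
    (hdescent : ∀ z ∈ ekelandSet f γ x₀, f z ≠ 0 → ∃ x, f x + γ * edist x z < f z) :
    ∃ z, f z = 0 ∧ γ * edist z x₀ ≤ f x₀ := by
  obtain ⟨z, hz, hmin⟩ := hf.exists_ekeland hγ0 hγ hx₀
  refine ⟨z, ?_, le_of_add_le_right hz⟩
  by_contra hne
  obtain ⟨x, hx⟩ := hdescent z hz hne
  exact (hmin x).not_gt hx

section Excess

variable {Y : Type*}

lemma exc_eq_iSup [PseudoEMetricSpace Y] (A C : Set Y) : exc A C = ⨆ y ∈ A, infEDist y C :=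
  rfl

lemma exc_le_iff [PseudoEMetricSpace Y] {A C : Set Y} {r : ℝ≥0∞} :
    exc A C ≤ r ↔ ∀ y ∈ A, infEDist y C ≤ r :=
  iSup₂_le_iff

lemma infEDist_le_exc [PseudoEMetricSpace Y] {A C : Set Y} {y : Y} (hy : y ∈ A) :
    infEDist y C ≤ exc A C :=
  exc_le_iff.1 le_rfl y hy

lemma exc_mono [PseudoEMetricSpace Y] {A B : Set Y} (hAB : A ⊆ B) (C : Set Y) :
    exc A C ≤ exc B C :=
  biSup_mono hAB

lemma exc_eq_zero_iff [EMetricSpace Y] {A C : Set Y} (hC : IsClosed C) :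
    exc A C = 0 ↔ A ⊆ C := by
  rw [← nonpos_iff_eq_zero, exc_le_iff]
  simp only [nonpos_iff_eq_zero, ← mem_closure_iff_infEDist_zero, hC.closure_eq, subset_def]

lemma exc_le_hausdorffEDist [PseudoEMetricSpace Y] {A B C : Set Y} (hB : B ⊆ C) :
    exc A C ≤ hausdorffEDist A B :=
  exc_le_iff.2 fun _ hy => (infEDist_anti hB).trans (infEDist_le_hausdorffEDist_of_mem hy)

lemma lowerSemicontinuous_exc {X : Type*} [PseudoMetricSpace X] [PseudoEMetricSpace Y]
    {Φ : X → Set Y} (hΦ : ∀ x, SVLscAt Φ x) (C : Set Y) :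
    LowerSemicontinuous fun x => exc (Φ x) C := by
  intro x₀ c hc
  obtain ⟨y₀, hy₀, hy₀c⟩ : ∃ y ∈ Φ x₀, c < infEDist y C := by
    simpa only [exc_eq_iSup, lt_iSup_iff, exists_prop] using hc
  obtain ⟨δ, hδ, hnear⟩ := hΦ x₀ {y | c < infEDist y C}
    (isOpen_lt continuous_const continuous_infEDist) ⟨y₀, hy₀, hy₀c⟩
  filter_upwards [closedBall_mem_nhds x₀ hδ] with x hx
  obtain ⟨y, hyΦ, hyc⟩ := hnear x hx
  exact hyc.trans_le (infEDist_le_exc hyΦ)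

end Excess

lemma ENNReal.tsub_add_lt_self {a b c : ℝ≥0∞} (ha : a ≠ ⊤) (hcb : c < b) (hca : c < a) :
    a - b + c < a := by
  rcases le_or_gt b a with hba | hab
  · calc a - b + c < a - b + b := ENNReal.add_lt_add_left (ne_top_of_le_ne_top ha tsub_le_self) hcb
      _ = a := tsub_add_cancel_of_le hba
  · rwa [tsub_eq_zero_of_le hab.le, zero_add]

lemma Convex.add_mem_of_smul_mem {Y : Type*} [AddCommGroup Y] [Module ℝ Y] {C : Set Y}
    (hC : Convex ℝ C) (hcone : ∀ t : ℝ, 0 < t → ∀ y ∈ C, t • y ∈ C) {a b : Y} (ha : a ∈ C)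
    (hb : b ∈ C) : a + b ∈ C := by
  have := hcone 2 two_pos _ (hC ha hb (by norm_num : (0:ℝ) ≤ 1 / 2) (by norm_num : (0:ℝ) ≤ 1 / 2)
    (by norm_num))
  rwa [smul_add, smul_smul, smul_smul, show (2:ℝ) * (1 / 2) = 1 by norm_num, one_smul,
    one_smul] at this

section ConvexCone

variable {Y : Type*} [NormedAddCommGroup Y] [NormedSpace ℝ Y] {C S : Set Y} {r t : ℝ}

lemma closedBall_add_smul_subset (hC : Convex ℝ C) (hcone : ∀ t : ℝ, 0 < t → ∀ y ∈ C, t • y ∈ C)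
    (hS : S + r • closedBall (0:Y) 1 ⊆ C) (hr : 0 ≤ r) (ht : 0 < t) {c h : Y} (hc : c ∈ C)
    (hh : h ∈ S) : closedBall (c + t • h) (t * r) ⊆ C := by
  intro w hw
  have hmem : h + t⁻¹ • (w - (c + t • h)) ∈ C := by
    refine hS (add_mem_add hh ?_)
    rw [smul_unitClosedBall_of_nonneg hr, mem_closedBall_zero_iff, norm_smul,
      Real.norm_of_nonneg (inv_nonneg.2 ht.le), inv_mul_le_iff₀ ht, ← dist_eq_norm]
    exact hw
  have hw : w = c + t • (h + t⁻¹ • (w - (c + t • h))) := by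
    rw [smul_add, smul_smul, mul_inv_cancel₀ ht.ne', one_smul]; abel
  rw [hw]
  exact hC.add_mem_of_smul_mem hcone hc (hcone t ht _ hmem)

lemma infEDist_le_edist_sub_of_closedBall_subset {c : Y} {ρ : ℝ} (hρ : 0 ≤ ρ)
    (hB : closedBall c ρ ⊆ C) (z : Y) : infEDist z C ≤ edist z c - ENNReal.ofReal ρ := by
  rcases le_or_gt (dist z c) ρ with hz | hz
  · rw [infEDist_zero_of_mem (hB hz)]
    exact zero_le
  have hpos : 0 < ‖z - c‖ := by rw [← dist_eq_norm]; linarith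
  set w := c + (ρ / ‖z - c‖) • (z - c)
  have hw : w ∈ C := hB <| by
    rw [mem_closedBall, dist_eq_norm, add_sub_cancel_left, norm_smul,
      Real.norm_of_nonneg (by positivity), div_mul_cancel₀ _ hpos.ne']
  have hzw : z - w = (1 - ρ / ‖z - c‖) • (z - c) := by
    simp only [w, sub_smul, one_smul]; abel
  calc infEDist z C ≤ edist z w := infEDist_le_edist_of_mem hw
    _ = ENNReal.ofReal (dist z c - ρ) := by
      rw [edist_dist, dist_eq_norm, hzw, norm_smul, Real.norm_of_nonneg, sub_mul, one_mul,
        div_mul_cancel₀ _ hpos.ne', dist_eq_norm]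
      rw [sub_nonneg, div_le_one hpos, ← dist_eq_norm]
      exact hz.le
    _ = edist z c - ENNReal.ofReal ρ := by rw [ENNReal.ofReal_sub _ hρ, edist_dist]

lemma infEDist_add_smul_le (hC : Convex ℝ C) (hcone : ∀ t : ℝ, 0 < t → ∀ y ∈ C, t • y ∈ C)
    (hS : S + r • closedBall (0:Y) 1 ⊆ C) (hr : 0 ≤ r) (ht : 0 < t) {h : Y} (hh : h ∈ S)
    (y : Y) : infEDist (y + t • h) C ≤ infEDist y C - ENNReal.ofReal (t * r) := by
  refine ENNReal.le_of_forall_pos_le_add fun ε hε hlt => ?_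
  have hfin : infEDist y C ≠ ⊤ := by
    rintro htop
    simp [htop] at hlt
  obtain ⟨c, hc, hyc⟩ :=
    infEDist_lt_iff.1 (ENNReal.lt_add_right hfin (ENNReal.coe_ne_zero.2 hε.ne'))
  calc infEDist (y + t • h) C ≤ edist (y + t • h) (c + t • h) - ENNReal.ofReal (t * r) :=
        infEDist_le_edist_sub_of_closedBall_subset (by positivity)
          (closedBall_add_smul_subset hC hcone hS hr ht hc hh) _
    _ = edist y c - ENNReal.ofReal (t * r) := by rw [edist_add_right]
    _ ≤ infEDist y C + ε - ENNReal.ofReal (t * r) := tsub_le_tsub_right hyc.le _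
    _ ≤ infEDist y C - ENNReal.ofReal (t * r) + ε := add_tsub_le_tsub_add

lemma exc_add_smul_add_smul_closedBall_le (hC : Convex ℝ C)
    (hcone : ∀ t : ℝ, 0 < t → ∀ y ∈ C, t • y ∈ C) (hS : S + r • closedBall (0:Y) 1 ⊆ C)
    (hr : 0 ≤ r) (ht : 0 < t) {ρ : ℝ} (hρ : 0 ≤ ρ) (A : Set Y) :
    exc (A + t • S + ρ • closedBall (0:Y) 1) C ≤
      exc A C - ENNReal.ofReal (t * r) + ENNReal.ofReal ρ := by
  refine exc_le_iff.2 ?_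
  rintro _ ⟨_, ⟨y, hy, _, ⟨h, hh, rfl⟩, rfl⟩, _, ⟨b, hb, rfl⟩, rfl⟩
  rw [mem_closedBall_zero_iff] at hb
  calc infEDist (y + t • h + ρ • b) C
      ≤ infEDist (y + t • h) C + edist (y + t • h + ρ • b) (y + t • h) :=
        infEDist_le_infEDist_add_edist
    _ ≤ exc A C - ENNReal.ofReal (t * r) + ENNReal.ofReal ρ := by
      gcongr
      · exact (infEDist_add_smul_le hC hcone hS hr ht hh y).trans
          (tsub_le_tsub_right (infEDist_le_exc hy) _)
      · rw [edist_dist, dist_eq_norm, add_sub_cancel_left, norm_smul, Real.norm_of_nonneg hρ]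
        exact ENNReal.ofReal_le_ofReal (mul_le_of_le_one_right hρ hb)

end ConvexCone

section Descent

variable {X Y : Type*} [NormedAddCommGroup X] [NormedSpace ℝ X]
  [NormedAddCommGroup Y] [NormedSpace ℝ Y] {C : Set Y}

lemma exists_exc_add_mul_edist_lt (hC : Convex ℝ C)
    (hcone : ∀ t : ℝ, 0 < t → ∀ y ∈ C, t • y ∈ C) {Φ H : X → Set Y} {z u : X} {σ r : ℝ}
    (hH : IsOuterPrederivAt Φ H z) (hu : ‖u‖ = 1) (hσ : 0 < σ) (hσr : σ < r)
    (hr : H u + r • closedBall (0:Y) 1 ⊆ C) (hz0 : exc (Φ z) C ≠ 0) (hz : exc (Φ z) C ≠ ⊤) :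
    ∃ x, exc (Φ x) C + ENNReal.ofReal σ * edist x z < exc (Φ z) C := by
  have hr0 : 0 < r := hσ.trans hσr
  obtain ⟨δ, hδ, hincl⟩ := hH.2 ((r - σ) / 2) (by linarith)
  set G := (exc (Φ z) C).toReal
  have hG : 0 < G := ENNReal.toReal_pos hz0 hz
  -- `t ≤ G / r` keeps the guaranteed decrease `t * r` below the current merit `G`
  set t := min δ (G / r)
  have ht : 0 < t := lt_min hδ (div_pos hG hr0)
  have htG : t * r ≤ G := by
    rw [← le_div_iff₀ hr0]
    exact min_le_right _ _
  have hstep : ‖z + t • u - z‖ = t := by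
    rw [add_sub_cancel_left, norm_smul, hu, mul_one, Real.norm_of_nonneg ht.le]
  have hsub : Φ (z + t • u) ⊆ Φ z + t • H u + ((r - σ) / 2 * t) • closedBall (0:Y) 1 := by
    have := hincl (z + t • u) (by rw [mem_closedBall, dist_eq_norm, hstep]; exact min_le_left _ _)
    rwa [hstep, add_sub_cancel_left, hH.1 t ht u] at this
  refine ⟨z + t • u, ?_⟩
  calc exc (Φ (z + t • u)) C + ENNReal.ofReal σ * edist (z + t • u) z
      ≤ exc (Φ z) C - ENNReal.ofReal (t * r) + ENNReal.ofReal ((r - σ) / 2 * t)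
          + ENNReal.ofReal (σ * t) := by
        gcongr
        · exact (exc_mono hsub C).trans (exc_add_smul_add_smul_closedBall_le hC hcone hr
            hr0.le ht (by nlinarith) _)
        · rw [edist_dist, dist_eq_norm, hstep, ENNReal.ofReal_mul hσ.le]
    _ = exc (Φ z) C - ENNReal.ofReal (t * r) + ENNReal.ofReal ((r + σ) / 2 * t) := by
        rw [add_assoc, ← ENNReal.ofReal_add (by nlinarith) (by positivity)]
        ring_nf
    _ < exc (Φ z) C := by
        refine ENNReal.tsub_add_lt_self hz ((ENNReal.ofReal_lt_ofReal_iff (by positivity)).2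
          (by nlinarith)) ?_
        rw [← ENNReal.ofReal_toReal hz, ENNReal.ofReal_lt_ofReal_iff hG]
        nlinarith

lemma exists_subset_mul_edist_le_exc [CompleteSpace X] (hCclosed : IsClosed C) (hC : Convex ℝ C)
    (hcone : ∀ t : ℝ, 0 < t → ∀ y ∈ C, t • y ∈ C) {Φ : X → Set Y} (hΦ : ∀ x, SVLscAt Φ x)
    {H : X → X → Set Y} {x₁ x₀ : X} {δ σ : ℝ} (hσ : 0 < σ)
    (hH : ∀ z ∈ closedBall x₁ δ, IsOuterPrederivAt Φ (H z) z)
    (hcore : ∀ z ∈ closedBall x₁ δ, ¬ Φ z ⊆ C →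
      ENNReal.ofReal σ < ⨆ u ∈ sphere (0:X) 1, coreSet C (H z u))
    (hx₀ : x₀ ∈ closedBall x₁ (δ / 2)) (hexc : exc (Φ x₀) C ≤ ENNReal.ofReal (σ * (δ / 2))) :
    ∃ z, Φ z ⊆ C ∧ ENNReal.ofReal σ * edist z x₀ ≤ exc (Φ x₀) C := by
  have hσ0 : ENNReal.ofReal σ ≠ 0 := (ENNReal.ofReal_pos.2 hσ).ne'
  have hdescent : ∀ z ∈ ekelandSet (fun x => exc (Φ x) C) (ENNReal.ofReal σ) x₀,
      exc (Φ z) C ≠ 0 → ∃ x, exc (Φ x) C + ENNReal.ofReal σ * edist x z < exc (Φ z) C := by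
    intro z hz hz0
    have hzx₀ : dist z x₀ ≤ δ / 2 := by
      have := (le_of_add_le_right hz).trans hexc
      have hδ : 0 ≤ δ / 2 := dist_nonneg.trans (mem_closedBall.1 hx₀)
      rwa [edist_dist, ← ENNReal.ofReal_mul hσ.le, ENNReal.ofReal_le_ofReal_iff (by positivity),
        mul_le_mul_iff_right₀ hσ] at this
    have hzδ : z ∈ closedBall x₁ δ := by
      rw [mem_closedBall] at hx₀ ⊢
      linarith [dist_triangle z x₀ x₁]
    obtain ⟨u, hu, hcoreu⟩ : ∃ u ∈ sphere (0:X) 1, ENNReal.ofReal σ < coreSet C (H z u) := by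
      simpa only [lt_iSup_iff, exists_prop] using
        hcore z hzδ (mt (exc_eq_zero_iff hCclosed).2 hz0)
    obtain ⟨r, ⟨-, hr⟩, hσr⟩ : ∃ r, (0 < r ∧ H z u + r • closedBall (0:Y) 1 ⊆ C) ∧
        ENNReal.ofReal σ < ENNReal.ofReal r := by
      simpa only [coreSet, lt_iSup_iff, exists_prop, mem_setOf_eq] using hcoreu
    exact exists_exc_add_mul_edist_lt hC hcone (hH z hzδ) (mem_sphere_zero_iff_norm.1 hu) hσ
      ((ENNReal.ofReal_lt_ofReal_iff_of_nonneg hσ.le).1 hσr) hr hz0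
      (ne_top_of_le_ne_top ENNReal.ofReal_ne_top ((le_of_add_le_left hz).trans hexc))
  obtain ⟨z, hz, hzx₀⟩ := (lowerSemicontinuous_exc hΦ C).exists_eq_zero_mul_edist_le hσ0
    ENNReal.ofReal_ne_top (ne_top_of_le_ne_top ENNReal.ofReal_ne_top hexc) hdescent
  exact ⟨z, (exc_eq_zero_iff hCclosed).1 hz, hzx₀⟩

end Descent

lemma convex_setOf_subset_of_concave {P X Y : Type*} [AddCommGroup P] [Module ℝ P]
    [AddCommGroup X] [Module ℝ X] [AddCommGroup Y] [Module ℝ Y] {C : Set Y} (hC : Convex ℝ C)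
    (hcone : ∀ t : ℝ, 0 < t → ∀ y ∈ C, t • y ∈ C) {F : P → X → Set Y}
    (hF : ∀ w₁ w₂ : P × X, ∀ t ∈ Icc (0:ℝ) 1,
      F (t • w₁ + (1 - t) • w₂).1 (t • w₁ + (1 - t) • w₂).2 ⊆
        t • F w₁.1 w₁.2 + (1 - t) • F w₂.1 w₂.2 + C) (p : P) :
    Convex ℝ {x | F p x ⊆ C} := by
  refine convex_iff_forall_pos.2 fun x₁ hx₁ x₂ hx₂ a b ha hb hab => ?_
  obtain rfl : b = 1 - a := by linarith
  have hsub := hF (p, x₁) (p, x₂) a ⟨ha.le, by linarith⟩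
  rw [Prod.fst_add, Prod.snd_add, Prod.smul_fst, Prod.smul_fst, Prod.smul_snd, Prod.smul_snd,
    ← add_smul, add_sub_cancel, one_smul] at hsub
  rintro _ hw
  obtain ⟨_, ⟨_, ⟨y₁, hy₁, rfl⟩, _, ⟨y₂, hy₂, rfl⟩, rfl⟩, c, hc, rfl⟩ := hsub hw
  exact hC.add_mem_of_smul_mem hcone (hC.add_mem_of_smul_mem hcone
    (hcone a ha _ (hx₁ hy₁)) (hcone (1 - a) hb _ (hx₂ hy₂))) hc

lemma dist_le_div_of_ofReal_mul_edist_le {X : Type*} [PseudoMetricSpace X] {x y : X} {σ a : ℝ}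
    (hσ : 0 < σ) (ha : 0 ≤ a)
    (h : ENNReal.ofReal σ * edist x y ≤ ENNReal.ofReal a) : dist x y ≤ a / σ := by
  rwa [edist_dist, ← ENNReal.ofReal_mul hσ.le, ENNReal.ofReal_le_ofReal_iff ha, mul_comm,
    ← le_div_iff₀ hσ] at h

section Localization

variable {X : Type*} [NormedAddCommGroup X] [NormedSpace ℝ X]

lemma Convex.exists_mem_inter_ball_dist_le {S : Set X} (hS : Convex ℝ S) {c x x' x₀ : X}
    {R β : ℝ} (hx : x ∈ ball c R) (hx' : x' ∈ S) (hx'x : dist x' x ≤ β) (hx₀ : x₀ ∈ S)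
    (hx₀c : dist x₀ c ≤ R / 2) : ∃ y ∈ S ∩ ball c R, dist y x ≤ 4 * β := by
  have hR : 0 < R := pos_of_mem_ball hx
  have hβ : 0 ≤ β := dist_nonneg.trans hx'x
  set θ := β / (β + R / 2)
  have hθ : θ * (β + R / 2) = β := div_mul_cancel₀ β (by positivity)
  have hθ0 : 0 ≤ θ := by positivity
  have hθ1 : θ < 1 := (div_lt_one (by positivity)).2 (by linarith)
  have hxc : dist x c < R := mem_ball.1 hx
  refine ⟨x' + θ • (x₀ - x'), ⟨hS.add_smul_sub_mem hx' hx₀ ⟨hθ0, hθ1.le⟩, ?_⟩, ?_⟩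
  · have hx'c : ‖x' - c‖ < β + R := by
      rw [← dist_eq_norm]; linarith [dist_triangle x' x c]
    have hsplit : x' + θ • (x₀ - x') - c = (1 - θ) • (x' - c) + θ • (x₀ - c) := by
      simp only [smul_sub, sub_smul, one_smul]; abel
    rw [mem_ball, dist_eq_norm, hsplit]
    calc ‖(1 - θ) • (x' - c) + θ • (x₀ - c)‖ ≤ (1 - θ) * ‖x' - c‖ + θ * ‖x₀ - c‖ := by
          refine (norm_add_le _ _).trans_eq ?_
          rw [norm_smul, norm_smul, Real.norm_of_nonneg (by linarith), Real.norm_of_nonneg hθ0]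
      _ < (1 - θ) * (β + R) + θ * (R / 2) := by
          rw [dist_eq_norm] at hx₀c
          exact add_lt_add_of_lt_of_le (mul_lt_mul_of_pos_left hx'c (by linarith))
            (mul_le_mul_of_nonneg_left hx₀c hθ0)
      _ = R := by linarith
  · have hx₀x' : dist x₀ x' ≤ 3 * R / 2 + β := by
      linarith [dist_triangle x₀ c x', dist_triangle c x x', dist_comm c x, dist_comm x x']
    calc dist (x' + θ • (x₀ - x')) x ≤ dist x' x + θ * dist x₀ x' := by
          rw [dist_eq_norm, dist_eq_norm, dist_eq_norm,
            show x' + θ • (x₀ - x') - x = (x' - x) + θ • (x₀ - x') by abel]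
          refine (norm_add_le _ _).trans_eq ?_
          rw [norm_smul, Real.norm_of_nonneg hθ0]
      _ ≤ β + θ * (3 * R / 2 + β) := by gcongr
      _ ≤ 4 * β := by nlinarith

lemma infEDist_inter_ball_le_of_errorBound {S : Set X} {g : X → ℝ≥0∞} {x xbar : X}
    {R σ η : ℝ} (hS : Convex ℝ S) (hσ : 0 < σ)
    (hbound : ∀ x ∈ ball xbar R, g x ≤ ENNReal.ofReal (σ * R) →
      ∃ z ∈ S, ENNReal.ofReal σ * edist z x ≤ g x)
    (hcenter : g xbar ≤ ENNReal.ofReal (σ * R / 2)) (hx : x ∈ ball xbar R)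
    (hgx : g x ≤ ENNReal.ofReal η) (hη₀ : 0 ≤ η) (hη : η ≤ σ * R) :
    infEDist x (S ∩ ball xbar R) ≤ ENNReal.ofReal (4 * η / σ) := by
  have hR : 0 < R := pos_of_mem_ball hx
  obtain ⟨x', hx'S, hx'⟩ := hbound x hx (hgx.trans (ENNReal.ofReal_le_ofReal hη))
  obtain ⟨x₀, hx₀S, hx₀⟩ := hbound xbar (mem_ball_self hR)
    (hcenter.trans (ENNReal.ofReal_le_ofReal (by nlinarith)))
  have hx₀c : dist x₀ xbar ≤ R / 2 := by
    have := dist_le_div_of_ofReal_mul_edist_le hσ (by positivity) (hx₀.trans hcenter)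
    rwa [mul_div_assoc, mul_div_cancel_left₀ _ hσ.ne'] at this
  obtain ⟨y, hy, hyx⟩ := hS.exists_mem_inter_ball_dist_le hx hx'S
    (dist_le_div_of_ofReal_mul_edist_le hσ hη₀ (hx'.trans hgx)) hx₀S hx₀c
  calc infEDist x (S ∩ ball xbar R) ≤ edist x y := infEDist_le_edist_of_mem hy
    _ = ENNReal.ofReal (dist y x) := by rw [edist_comm, edist_dist]
    _ ≤ ENNReal.ofReal (4 * η / σ) := ENNReal.ofReal_le_ofReal (hyx.trans_eq (by ring))

theorem exists_lipschitz_localization_of_errorBound {P : Type*} [PseudoMetricSpace P]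
    (S : P → Set X) (g : P → X → ℝ≥0∞) {pbar : P} {xbar : X} {R σ ℓ : ℝ} (hR : 0 < R)
    (hσ : 0 < σ) (hℓ : 0 < ℓ) (hconv : ∀ᶠ p in 𝓝 pbar, Convex ℝ (S p))
    (hbound : ∀ᶠ p in 𝓝 pbar, ∀ x ∈ ball xbar R, g p x ≤ ENNReal.ofReal (σ * R) →
      ∃ z ∈ S p, ENNReal.ofReal σ * edist z x ≤ g p x)
    (hcenter : ∀ᶠ p in 𝓝 pbar, g p xbar ≤ ENNReal.ofReal (σ * R / 2))
    (hlip : ∃ τ > 0, ∀ p₁ ∈ ball pbar τ, ∀ p₂ ∈ ball pbar τ, ∀ x ∈ S p₂ ∩ ball xbar R,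
      g p₁ x ≤ ENNReal.ofReal (ℓ * dist p₁ p₂)) :
    ∃ V ∈ 𝓝 pbar, ∃ U ∈ 𝓝 xbar, ∃ L : ℝ, 0 < L ∧ ∀ p₁ ∈ V, ∀ p₂ ∈ V,
      hausdorffEDist (S p₁ ∩ U) (S p₂ ∩ U) ≤ ENNReal.ofReal (L * dist p₁ p₂) := by
  obtain ⟨τ, hτ, hlip⟩ := hlip
  obtain ⟨ρ₀, hρ₀, hnear⟩ := eventually_nhds_iff_ball.1 (hconv.and (hbound.and hcenter))
  set ρ := min (min ρ₀ τ) (σ * R / (2 * ℓ))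
  have hρ : 0 < ρ := lt_min (lt_min hρ₀ hτ) (by positivity)
  have hρℓ : 2 * ℓ * ρ ≤ σ * R := (le_div_iff₀' (by positivity)).1 (min_le_right _ _)
  have hρτ : ball pbar ρ ⊆ ball pbar τ :=
    ball_subset_ball ((min_le_left _ _).trans (min_le_right _ _))
  have hone : ∀ p₁ ∈ ball pbar ρ, ∀ p₂ ∈ ball pbar ρ, ∀ x ∈ S p₂ ∩ ball xbar R,
      infEDist x (S p₁ ∩ ball xbar R) ≤ ENNReal.ofReal (4 * ℓ / σ * dist p₁ p₂) := by
    intro p₁ hp₁ p₂ hp₂ x hx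
    obtain ⟨hconv₁, hbound₁, hcenter₁⟩ :=
      hnear p₁ (ball_subset_ball ((min_le_left _ _).trans (min_le_left _ _)) hp₁)
    have hd : dist p₁ p₂ < 2 * ρ := by
      linarith [dist_triangle_right p₁ p₂ pbar, mem_ball.1 hp₁, mem_ball.1 hp₂]
    have := infEDist_inter_ball_le_of_errorBound hconv₁ hσ hbound₁ hcenter₁ hx.2
      (hlip p₁ (hρτ hp₁) p₂ (hρτ hp₂) x hx) (by positivity) (by nlinarith)
    exact this.trans_eq (congrArg ENNReal.ofReal (by ring))
  refine ⟨ball pbar ρ, ball_mem_nhds _ hρ, ball xbar R, ball_mem_nhds _ hR, 4 * ℓ / σ,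
    by positivity, fun p₁ hp₁ p₂ hp₂ => hausdorffEDist_le_of_infEDist ?_ ?_⟩
  · exact fun x hx => (hone p₂ hp₂ p₁ hp₁ x hx).trans_eq (by rw [dist_comm])
  · exact fun x hx => hone p₁ hp₁ p₂ hp₂ x hx

end Localization

theorem lipschitz_localization_of_Solv_general
    {P X Y : Type*} [NormedAddCommGroup P] [NormedSpace ℝ P]
    [NormedAddCommGroup X] [NormedSpace ℝ X] [CompleteSpace X]
    [NormedAddCommGroup Y] [NormedSpace ℝ Y]
    (C : Set Y) (hCclosed : IsClosed C) (hCconv : Convex ℝ C)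
    (hCcone : ∀ t : ℝ, 0 < t → ∀ y ∈ C, t • y ∈ C)
    (F : P → X → Set Y)
    (pbar : P) (xbar : X)
    (hsol : F pbar xbar ⊆ C)
    (husc : UpperSemicontinuousAt (fun p => exc (F p xbar) C) pbar)
    (hlsc : ∃ δ₁ > (0:ℝ), ∀ p ∈ closedBall pbar δ₁, ∀ x : X, SVLscAt (F p) x)
    (δ₂ : ℝ) (hδ₂ : 0 < δ₂) (H : P → X → X → Set Y)
    (hH : ∀ p ∈ closedBall pbar δ₂, ∀ x ∈ closedBall xbar δ₂,
      IsOuterPrederivAt (F p) (H p x) x)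
    (σH : ℝ≥0∞)
    (hσHdef : σH = ⨅ q : {q : P × X // q.1 ∈ closedBall pbar δ₂ ∧ q.2 ∈ closedBall xbar δ₂ ∧
        ¬ F q.1 q.2 ⊆ C}, ⨆ u ∈ sphere (0:X) 1, coreSet C (H q.val.1 q.val.2 u))
    (hσHpos : 0 < σH)
    (τ s ℓ : ℝ) (hτ : 0 < τ) (hs : 0 < s) (hℓ : 0 < ℓ)
    (hlip : ∀ x ∈ closedBall xbar s, ∀ p₁ ∈ closedBall pbar τ, ∀ p₂ ∈ closedBall pbar τ,
      EMetric.hausdorffEdist (F p₁ x) (F p₂ x) ≤ ENNReal.ofReal (ℓ * dist p₁ p₂))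
    (hFconc : ∀ w₁ w₂ : P × X, ∀ t ∈ Icc (0:ℝ) 1,
      F (t • w₁ + (1 - t) • w₂).1 (t • w₁ + (1 - t) • w₂).2 ⊆
        t • F w₁.1 w₁.2 + (1 - t) • F w₂.1 w₂.2 + C) :
    ∃ V ∈ nhds pbar, ∃ U ∈ nhds xbar, ∃ L : ℝ, 0 < L ∧
      ∀ p₁ ∈ V, ∀ p₂ ∈ V,
        EMetric.hausdorffEdist ({x : X | F p₁ x ⊆ C} ∩ U) ({x : X | F p₂ x ⊆ C} ∩ U)
          ≤ ENNReal.ofReal (L * dist p₁ p₂) := by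
  obtain ⟨δ₁, hδ₁, hlsc⟩ := hlsc
  obtain ⟨σ, hσ, hσH⟩ : ∃ σ : ℝ, 0 < σ ∧ ENNReal.ofReal σ < σH := by
    obtain ⟨q, -, hq, hqσ⟩ := ENNReal.lt_iff_exists_real_btwn.1 hσHpos
    exact ⟨q, ENNReal.ofReal_pos.1 hq, hqσ⟩
  set R := min (δ₂ / 2) s
  have hR : 0 < R := lt_min (half_pos hδ₂) hs
  refine exists_lipschitz_localization_of_errorBound (fun p => {x | F p x ⊆ C})
    (fun p x => exc (F p x) C) hR hσ hℓ
    (Eventually.of_forall (convex_setOf_subset_of_concave hCconv hCcone hFconc)) ?_ ?_ ⟨τ, hτ, ?_⟩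
  · filter_upwards [closedBall_mem_nhds pbar hδ₁, closedBall_mem_nhds pbar hδ₂]
      with p hp₁ hp₂ x hx hexc
    have hcore : ∀ z ∈ closedBall xbar δ₂, ¬ F p z ⊆ C →
        ENNReal.ofReal σ < ⨆ u ∈ sphere (0:X) 1, coreSet C (H p z u) := fun z hz hzC =>
      hσH.trans_le (hσHdef ▸ iInf_le_of_le ⟨(p, z), hp₂, hz, hzC⟩ le_rfl)
    exact exists_subset_mul_edist_le_exc hCclosed hCconv hCcone (hlsc p hp₁) hσ (hH p hp₂) hcore
      (closedBall_subset_closedBall (min_le_left _ _) (ball_subset_closedBall hx))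
      (hexc.trans (ENNReal.ofReal_le_ofReal (mul_le_mul_of_nonneg_left (min_le_left _ _) hσ.le)))
  · have h0 : exc (F pbar xbar) C < ENNReal.ofReal (σ * R / 2) := by
      rw [(exc_eq_zero_iff hCclosed).2 hsol]
      exact ENNReal.ofReal_pos.2 (by positivity)
    exact (husc _ h0).mono fun p hp => hp.le
  · rintro p₁ hp₁ p₂ hp₂ x ⟨hx, hxR⟩
    exact (exc_le_hausdorffEDist hx).trans (hlip x
      (closedBall_subset_closedBall (min_le_right _ _) (ball_subset_closedBall hxR))
      p₁ (ball_subset_closedBall hp₁) p₂ (ball_subset_closedBall hp₂))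

/-- **Lipschitz continuity of the solution mapping under truncation.**
Under the hypotheses (i)–(vi) and `C`-concavity of `F` on `P × X`, the mapping
`Solv` has a Lipschitz continuous graphical localization around `(pbar, xbar)`. -/
theorem lipschitz_localization_of_Solv
    {P X Y : Type*} [NormedAddCommGroup P] [NormedSpace ℝ P]
    [NormedAddCommGroup X] [NormedSpace ℝ X] [CompleteSpace X]
    [NormedAddCommGroup Y] [NormedSpace ℝ Y]
    (C : Set Y) (hCclosed : IsClosed C) (hCconv : Convex ℝ C)
    (hCcone : ∀ t : ℝ, 0 < t → ∀ y ∈ C, t • y ∈ C) (hCint : (interior C).Nonempty)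
    (F : P → X → Set Y) (hFne : ∀ p x, (F p x).Nonempty)
    (pbar : P) (xbar : X)
    (hsol : F pbar xbar ⊆ C)
    (husc : UpperSemicontinuousAt (fun p => exc (F p xbar) C) pbar)
    (hlsc : ∃ δ₁ > (0:ℝ), ∀ p ∈ closedBall pbar δ₁, ∀ x : X, SVLscAt (F p) x)
    (δ₂ : ℝ) (hδ₂ : 0 < δ₂) (H : P → X → X → Set Y)
    (hH : ∀ p ∈ closedBall pbar δ₂, ∀ x ∈ closedBall xbar δ₂,
      IsOuterPrederivAt (F p) (H p x) x)
    (σH : ℝ≥0∞)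
    (hσHdef : σH = ⨅ q : {q : P × X // q.1 ∈ closedBall pbar δ₂ ∧ q.2 ∈ closedBall xbar δ₂ ∧
        ¬ F q.1 q.2 ⊆ C}, ⨆ u ∈ sphere (0:X) 1, coreSet C (H q.val.1 q.val.2 u))
    (hσHpos : 0 < σH)
    (τ s ℓ : ℝ) (hτ : 0 < τ) (hs : 0 < s) (hℓ : 0 < ℓ)
    (hlip : ∀ x ∈ closedBall xbar s, ∀ p₁ ∈ closedBall pbar τ, ∀ p₂ ∈ closedBall pbar τ,
      EMetric.hausdorffEdist (F p₁ x) (F p₂ x) ≤ ENNReal.ofReal (ℓ * dist p₁ p₂))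
    (hFconc : ∀ w₁ w₂ : P × X, ∀ t ∈ Icc (0:ℝ) 1,
      F (t • w₁ + (1 - t) • w₂).1 (t • w₁ + (1 - t) • w₂).2 ⊆
        t • F w₁.1 w₁.2 + (1 - t) • F w₂.1 w₂.2 + C) :
    ∃ V ∈ nhds pbar, ∃ U ∈ nhds xbar, ∃ L : ℝ, 0 < L ∧
      ∀ p₁ ∈ V, ∀ p₂ ∈ V,
        EMetric.hausdorffEdist ({x : X | F p₁ x ⊆ C} ∩ U) ({x : X | F p₂ x ⊆ C} ∩ U)
          ≤ ENNReal.ofReal (L * dist p₁ p₂) :=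
  lipschitz_localization_of_Solv_general C hCclosed hCconv hCcone F pbar xbar hsol husc hlsc δ₂ hδ₂
    H hH σH hσHdef hσHpos τ s ℓ hτ hs hℓ hlip hFconc
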